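/- Let F be a union-closed family of nonempty subsets of a finite set N covering N, and v a supermodular capacity on (F, ⊆). Then for all f ∈ ℝ^N₊, ∫_F f dv = max { Σ_{F∈F} y_F v(F) : y ∈ ℝ^F₊, Σ_{F∈F} y_F 1_F ≤ f }, and consequently the functional f ↦ ∫_F f dv is positively homogeneous and superadditive on ℝ^N₊. -/

import Mathlib

/-!
Extend `v` to all of `2^N` by `w A = v (kernel A)`, where `kernel A` is the largest member of the
family inside `A`. Union-closedness makes `w` a monotone supermodular set function with the same
Möbius coefficients `β`. Enumerate `N` as `a₀, …, aₙ₋₁` with `f` decreasing and let `Nₖ` be the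
first `k` elements; then `∫ f dv = ∑ₖ (f aₖ - f aₖ₊₁) w(Nₖ₊₁)` with `f aₙ := 0`. This value is attained by the
packing that puts weight `f aₖ - f aₖ₊₁` on `kernel Nₖ₊₁`, and it bounds every packing from
above by weak duality, with the greedy marginal vector `x a = w(N_{i+1}) - w(N_i)` (`a = aᵢ`) as
dual solution: supermodularity gives `w F ≤ ∑_{a ∈ F} x a` for every `F`. Superadditivity
follows since packings for `f` and `g` add up to one for `f + g`.
-/

open scoped Classical

/-- The Choquet integral on a family via the Möbius representation:
∫ f dv = Σ_{F ∈ Fam} β_F · min_{i∈F} f_i. -/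
noncomputable def cho {N : Type*} (Fam : Finset (Finset N))
    (hne : ∀ F ∈ Fam, F.Nonempty) (β : Finset N → ℝ) (f : N → ℝ) : ℝ :=
  ∑ F ∈ Fam.attach, β F.1 * F.1.inf' (hne F.1 F.2) f

open Finset

namespace Choquet

section Kernel

variable {N : Type*} [DecidableEq N] {Fam : Finset (Finset N)} {A F : Finset N}

/-- The union of the members of `Fam` inside `A`; the paper's `F ∧ G` is `kernel Fam (F ∩ G)`. -/
def kernel (Fam : Finset (Finset N)) (A : Finset N) : Finset N :=
  (Fam.filter (fun H => H ⊆ A)).sup id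

lemma kernel_subset (Fam : Finset (Finset N)) (A : Finset N) : kernel Fam A ⊆ A :=
  Finset.sup_le fun _ hH => (mem_filter.1 hH).2

lemma subset_kernel (hF : F ∈ Fam) (hFA : F ⊆ A) : F ⊆ kernel Fam A :=
  le_sup (f := id) (mem_filter.2 ⟨hF, hFA⟩)

lemma kernel_empty : kernel Fam (∅ : Finset N) = ∅ :=
  subset_empty.1 (kernel_subset Fam ∅)

lemma kernel_of_mem (hF : F ∈ Fam) : kernel Fam F = F :=
  (kernel_subset Fam F).antisymm (subset_kernel hF subset_rfl)

lemma kernel_mem (huc : SupClosed (Fam : Set (Finset N))) (hF : F ∈ Fam) (hFA : F ⊆ A) :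
    kernel Fam A ∈ Fam :=
  huc.finsetSup_mem ⟨F, mem_filter.2 ⟨hF, hFA⟩⟩ fun _ hH => (mem_filter.1 hH).1

lemma kernel_mem_or_eq_empty (huc : SupClosed (Fam : Set (Finset N))) (A : Finset N) :
    kernel Fam A ∈ Fam ∨ kernel Fam A = ∅ := by
  by_cases h : ∃ F ∈ Fam, F ⊆ A
  · obtain ⟨F, hF, hFA⟩ := h
    exact Or.inl (kernel_mem huc hF hFA)
  · exact Or.inr (by simp [kernel, filter_false_of_mem fun F hF hFA => h ⟨F, hF, hFA⟩])

lemma filter_subset_kernel (A : Finset N) :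
    Fam.filter (fun F => F ⊆ kernel Fam A) = Fam.filter (fun F => F ⊆ A) :=
  filter_congr fun _ hF => ⟨fun h => h.trans (kernel_subset Fam A), subset_kernel hF⟩

end Kernel

section Capacity

variable {N : Type*} [DecidableEq N]

structure IsSupermodularCapacity (Fam : Finset (Finset N)) (v : Finset N → ℝ) : Prop where
  nonneg : ∀ F ∈ Fam, 0 ≤ v F
  mono : ∀ F ∈ Fam, ∀ G ∈ Fam, F ⊆ G → v F ≤ v G
  map_empty : v ∅ = 0
  supermodular : ∀ F ∈ Fam, ∀ G ∈ Fam, v F + v G ≤ v (F ∪ G) + v (kernel Fam (F ∩ G))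

variable {Fam : Finset (Finset N)} {v : Finset N → ℝ}

lemma IsSupermodularCapacity.kernel_nonneg (hv : IsSupermodularCapacity Fam v)
    (huc : SupClosed (Fam : Set (Finset N))) (A : Finset N) : 0 ≤ v (kernel Fam A) := by
  rcases kernel_mem_or_eq_empty huc A with h | h
  · exact hv.nonneg _ h
  · rw [h, hv.map_empty]

lemma IsSupermodularCapacity.le_kernel (hv : IsSupermodularCapacity Fam v)
    (huc : SupClosed (Fam : Set (Finset N))) {F A : Finset N} (hF : F ∈ Fam) (hFA : F ⊆ A) :
    v F ≤ v (kernel Fam A) :=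
  hv.mono F hF _ (kernel_mem huc hF hFA) (subset_kernel hF hFA)

lemma IsSupermodularCapacity.monotone_kernel (hv : IsSupermodularCapacity Fam v)
    (huc : SupClosed (Fam : Set (Finset N))) : Monotone fun A => v (kernel Fam A) := by
  intro A B hAB
  rcases kernel_mem_or_eq_empty huc A with h | h
  · exact hv.le_kernel huc h ((kernel_subset Fam A).trans hAB)
  · simp only [h, hv.map_empty]
    exact hv.kernel_nonneg huc B

lemma IsSupermodularCapacity.supermodular_kernel (hv : IsSupermodularCapacity Fam v)
    (huc : SupClosed (Fam : Set (Finset N))) (A B : Finset N) :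
    v (kernel Fam A) + v (kernel Fam B) ≤ v (kernel Fam (A ∪ B)) + v (kernel Fam (A ∩ B)) := by
  have hmono := hv.monotone_kernel huc
  rcases kernel_mem_or_eq_empty huc A with hA | hA
  · rcases kernel_mem_or_eq_empty huc B with hB | hB
    · have hunion : v (kernel Fam A ∪ kernel Fam B) ≤ v (kernel Fam (A ∪ B)) :=
        hv.le_kernel huc (huc hA hB)
          (union_subset_union (kernel_subset Fam A) (kernel_subset Fam B))
      have hinter : v (kernel Fam (kernel Fam A ∩ kernel Fam B)) ≤ v (kernel Fam (A ∩ B)) :=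
        hmono (inter_subset_inter (kernel_subset Fam A) (kernel_subset Fam B))
      linarith [hv.supermodular _ hA _ hB]
    · rw [hB, hv.map_empty, inter_comm]
      linarith [hmono (subset_union_left : A ⊆ A ∪ B), hv.kernel_nonneg huc (B ∩ A)]
  · rw [hA, hv.map_empty]
    linarith [hmono (subset_union_right : B ⊆ A ∪ B), hv.kernel_nonneg huc (A ∩ B)]

lemma kernel_eq_sum {β : Finset N → ℝ} (huc : SupClosed (Fam : Set (Finset N))) (hv0 : v ∅ = 0)
    (hrep : ∀ G ∈ Fam, v G = ∑ F ∈ Fam.filter (fun F => F ⊆ G), β F) (A : Finset N) :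
    v (kernel Fam A) = ∑ F ∈ Fam.filter (fun F => F ⊆ A), β F := by
  rw [← filter_subset_kernel A]
  by_cases h : kernel Fam A ∈ Fam
  · exact hrep _ h
  · have hA : kernel Fam A = ∅ := (kernel_mem_or_eq_empty huc A).resolve_left h
    have hempty : Fam.filter (fun F => F ⊆ kernel Fam A) = ∅ :=
      filter_false_of_mem fun F hF hFA => h (hA ▸ subset_empty.1 (hA ▸ hFA) ▸ hF)
    rw [hempty, sum_empty, hA, hv0]

end Capacity

section Greedy

variable {N : Type*} {n : ℕ} (e : Fin n ≃ N)

/-- Extended by `0` from `k = n` on, so that the gaps telescope to `f`. -/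
noncomputable def sortedVal (f : N → ℝ) (k : ℕ) : ℝ :=
  if h : k < n then f (e ⟨k, h⟩) else 0

noncomputable def gap (f : N → ℝ) (k : ℕ) : ℝ :=
  sortedVal e f k - sortedVal e f (k + 1)

def initSeg [Fintype N] (k : ℕ) : Finset N :=
  univ.filter fun a => (e.symm a : ℕ) < k

variable {e}

lemma sortedVal_symm (f : N → ℝ) (a : N) : sortedVal e f (e.symm a) = f a := by
  simp [sortedVal]

lemma gap_nonneg {f : N → ℝ} (hf : ∀ a, 0 ≤ f a) (he : Antitone (f ∘ e)) (k : ℕ) :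
    0 ≤ gap e f k := by
  unfold gap sortedVal
  split_ifs with h1 h2
  · exact sub_nonneg.2 (he (Fin.mk_le_mk.2 k.le_succ))
  · simpa using hf _
  · omega
  · simp

lemma sum_gap_of_le (f : N → ℝ) {p : ℕ} (hp : p ≤ n) :
    ∑ k ∈ range n, (if p ≤ k then gap e f k else 0) = sortedVal e f p := by
  rw [← sum_filter, show (range n).filter (p ≤ ·) = Ico p n by ext; simp [and_comm]]
  have htele := sum_Ico_sub (sortedVal e f) hp
  have hn : sortedVal e f n = 0 := dif_neg n.lt_irrefl
  simp only [gap, sum_sub_distrib] at htele ⊢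
  linarith

variable [Fintype N]

@[simp]
lemma mem_initSeg {k : ℕ} {a : N} : a ∈ initSeg e k ↔ (e.symm a : ℕ) < k := by
  simp [initSeg]

lemma initSeg_zero : initSeg e 0 = ∅ := by
  ext a; simp

lemma initSeg_succ_symm [DecidableEq N] (a : N) :
    initSeg e ((e.symm a : ℕ) + 1) = insert a (initSeg e (e.symm a)) := by
  ext b
  simp only [mem_initSeg, mem_insert, Nat.lt_succ_iff_lt_or_eq, ← Fin.ext_iff,
    e.symm.injective.eq_iff, or_comm]

lemma sum_gap_subset_initSeg [DecidableEq N] {f : N → ℝ} (he : Antitone (f ∘ e)) {F : Finset N}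
    (hF : F.Nonempty) :
    ∑ k ∈ range n, (if F ⊆ initSeg e (k + 1) then gap e f k else 0) = F.inf' hF f := by
  obtain ⟨a, ha, hmax⟩ := F.exists_max_image (fun b => (e.symm b : ℕ)) hF
  have hsub : ∀ k, F ⊆ initSeg e (k + 1) ↔ (e.symm a : ℕ) ≤ k := fun k =>
    ⟨fun h => Nat.lt_succ_iff.1 (mem_initSeg.1 (h ha)),
      fun h b hb => mem_initSeg.2 (Nat.lt_succ_iff.2 ((hmax b hb).trans h))⟩
  have hinf : F.inf' hF f = f a :=
    le_antisymm (inf'_le f ha) (le_inf' hF f fun b hb => by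
      simpa using he (Fin.le_def.2 (hmax b hb) : e.symm b ≤ e.symm a))
  simp only [hsub, hinf]
  rw [sum_gap_of_le f (e.symm a).is_lt.le, sortedVal_symm]

lemma cho_eq_sum_gap_mul [DecidableEq N] {Fam : Finset (Finset N)} (hne : ∀ F ∈ Fam, F.Nonempty)
    {β w : Finset N → ℝ} (hw : ∀ A, w A = ∑ F ∈ Fam.filter (fun F => F ⊆ A), β F)
    {f : N → ℝ} (he : Antitone (f ∘ e)) :
    cho Fam hne β f = ∑ k ∈ range n, gap e f k * w (initSeg e (k + 1)) := by
  calc cho Fam hne β f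
      = ∑ F ∈ Fam, β F * ∑ k ∈ range n, (if F ⊆ initSeg e (k + 1) then gap e f k else 0) := by
        rw [cho, ← sum_attach Fam]
        exact sum_congr rfl fun F _ => by rw [sum_gap_subset_initSeg he (hne F.1 F.2)]
    _ = _ := by
        simp_rw [hw, sum_filter, mul_sum, mul_ite, mul_zero]
        rw [sum_comm]
        simp_rw [mul_comm]

lemma sum_gap_mem_initSeg [DecidableEq N] {f : N → ℝ} (he : Antitone (f ∘ e)) (a : N) :
    ∑ k ∈ range n, (if a ∈ initSeg e (k + 1) then gap e f k else 0) = f a := by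
  simpa using sum_gap_subset_initSeg he (singleton_nonempty a)

lemma initSeg_mono : Monotone (initSeg e) :=
  fun _ _ h _ ha => mem_initSeg.2 ((mem_initSeg.1 ha).trans_le h)

variable (e) in
def marginal (w : Finset N → ℝ) (a : N) : ℝ :=
  w (initSeg e ((e.symm a : ℕ) + 1)) - w (initSeg e (e.symm a))

lemma marginal_nonneg {w : Finset N → ℝ} (hmono : Monotone w) (a : N) : 0 ≤ marginal e w a :=
  sub_nonneg.2 (hmono (initSeg_mono (Nat.le_succ _)))

lemma le_sum_marginal [DecidableEq N] {w : Finset N → ℝ} (hw0 : w ∅ = 0)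
    (hsup : ∀ A B, w A + w B ≤ w (A ∪ B) + w (A ∩ B)) (A : Finset N) :
    w A ≤ ∑ a ∈ A, marginal e w a := by
  induction A using Finset.induction_on_max_value (fun a => (e.symm a : ℕ)) with
  | empty => simp [hw0]
  | insert a s ha hmax ih =>
    have hs : s ⊆ initSeg e (e.symm a) := fun b hb => mem_initSeg.2 <|
      (hmax b hb).lt_of_ne fun h => ha (e.symm.injective (Fin.ext h) ▸ hb)
    have hstep := hsup (insert a s) (initSeg e (e.symm a))
    rw [insert_union, union_eq_right.2 hs, ← initSeg_succ_symm,
      insert_inter_of_notMem (by simp), inter_eq_left.2 hs] at hstep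
    rw [sum_insert ha, marginal]
    linarith

lemma sum_marginal_initSeg [DecidableEq N] {w : Finset N → ℝ} (hw0 : w ∅ = 0) {k : ℕ}
    (hk : k ≤ n) : ∑ a ∈ initSeg e k, marginal e w a = w (initSeg e k) := by
  induction k with
  | zero => simp [initSeg_zero, hw0]
  | succ k ih =>
    have hsucc := initSeg_succ_symm (e := e) (e ⟨k, hk⟩)
    rw [Equiv.symm_apply_apply] at hsucc
    rw [hsucc, sum_insert (by simp), ih (by omega), marginal, Equiv.symm_apply_apply, ← hsucc]
    ring

/-- Abel summation along the sorted values of `f`. -/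
lemma sum_mul_eq_sum_gap_mul_sum [DecidableEq N] {f : N → ℝ} (he : Antitone (f ∘ e))
    (x : N → ℝ) :
    ∑ a, x a * f a = ∑ k ∈ range n, gap e f k * ∑ a ∈ initSeg e (k + 1), x a := by
  calc ∑ a, x a * f a
      = ∑ a, ∑ k ∈ range n, if a ∈ initSeg e (k + 1) then gap e f k * x a else 0 :=
        sum_congr rfl fun a _ => by
          rw [← sum_gap_mem_initSeg he a, mul_sum]
          simp_rw [mul_ite, mul_zero, mul_comm]
    _ = _ := by
        rw [sum_comm]
        simp_rw [sum_ite_mem, univ_inter, mul_sum]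

lemma sum_mul_le_sum_gap_mul [DecidableEq N] {Fam : Finset (Finset N)} {w : Finset N → ℝ}
    (hmono : Monotone w) (hw0 : w ∅ = 0) (hsup : ∀ A B, w A + w B ≤ w (A ∪ B) + w (A ∩ B))
    {f : N → ℝ} (he : Antitone (f ∘ e)) {y : Finset N → ℝ} (hy0 : ∀ F, 0 ≤ y F)
    (hy : ∀ a, ∑ F ∈ Fam.filter (fun F => a ∈ F), y F ≤ f a) :
    ∑ F ∈ Fam, y F * w F ≤ ∑ k ∈ range n, gap e f k * w (initSeg e (k + 1)) :=
  calc ∑ F ∈ Fam, y F * w F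
      ≤ ∑ F ∈ Fam, y F * ∑ a ∈ F, marginal e w a :=
        sum_le_sum fun F _ => mul_le_mul_of_nonneg_left (le_sum_marginal hw0 hsup F) (hy0 F)
    _ = ∑ a, marginal e w a * ∑ F ∈ Fam.filter (fun F => a ∈ F), y F := by
        simp_rw [mul_sum]
        rw [sum_comm' (t' := univ) (s' := fun a => Fam.filter (fun F => a ∈ F)) (by simp)]
        simp_rw [mul_comm]
    _ ≤ ∑ a, marginal e w a * f a :=
        sum_le_sum fun a _ => mul_le_mul_of_nonneg_left (hy a) (marginal_nonneg hmono a)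
    _ = ∑ k ∈ range n, gap e f k * w (initSeg e (k + 1)) := by
        rw [sum_mul_eq_sum_gap_mul_sum he]
        exact sum_congr rfl fun k hk => by rw [sum_marginal_initSeg hw0 (mem_range.1 hk)]

/-- The greedy packing, which puts weight `gap e f k` on the largest member of `Fam` inside the
`k + 1` largest values of `f`. -/
lemma exists_packing_eq [DecidableEq N] {Fam : Finset (Finset N)} {v : Finset N → ℝ}
    (huc : SupClosed (Fam : Set (Finset N))) (hv0 : v ∅ = 0) {f : N → ℝ} (hf : ∀ a, 0 ≤ f a)
    (he : Antitone (f ∘ e)) :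
    ∃ y : Finset N → ℝ, (∀ F, 0 ≤ y F) ∧ (∀ a, ∑ F ∈ Fam.filter (fun F => a ∈ F), y F ≤ f a) ∧
      ∑ F ∈ Fam, y F * v F = ∑ k ∈ range n, gap e f k * v (kernel Fam (initSeg e (k + 1))) := by
  set K : ℕ → Finset N := fun k => kernel Fam (initSeg e (k + 1))
  refine ⟨fun S => ∑ k ∈ range n, if K k = S then gap e f k else 0,
    fun S => sum_nonneg fun k _ => ?_, fun a => ?_, ?_⟩
  · split_ifs
    exacts [gap_nonneg hf he k, le_rfl]
  · calc ∑ F ∈ Fam.filter (fun F => a ∈ F), ∑ k ∈ range n, (if K k = F then gap e f k else 0)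
        = ∑ k ∈ range n, if K k ∈ Fam.filter (fun F => a ∈ F) then gap e f k else 0 := by
          rw [sum_comm]
          simp_rw [sum_ite_eq]
      _ ≤ ∑ k ∈ range n, if a ∈ initSeg e (k + 1) then gap e f k else 0 := by
          refine sum_le_sum fun k _ => ?_
          split_ifs with hK ha
          · exact le_rfl
          · exact absurd (kernel_subset Fam _ (mem_filter.1 hK).2) ha
          · exact gap_nonneg hf he k
          · exact le_rfl
      _ = f a := sum_gap_mem_initSeg he a
  · calc ∑ F ∈ Fam, (∑ k ∈ range n, if K k = F then gap e f k else 0) * v F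
        = ∑ k ∈ range n, ∑ F ∈ Fam, if K k = F then gap e f k * v F else 0 := by
          simp_rw [sum_mul, ite_mul, zero_mul]
          rw [sum_comm]
      _ = _ := sum_congr rfl fun k _ => by
          rw [sum_ite_eq]
          split_ifs with hK
          · rfl
          · rw [(kernel_mem_or_eq_empty huc _).resolve_left hK, hv0, mul_zero]

end Greedy

lemma exists_equiv_fin_antitone {N : Type*} [Fintype N] {α : Type*} [LinearOrder α]
    (f : N → α) : ∃ (n : ℕ) (e : Fin n ≃ N), Antitone (f ∘ e) := by
  let g : Fin (Fintype.card N) → αᵒᵈ := fun i => OrderDual.toDual (f ((Fintype.equivFin N).symm i))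
  exact ⟨_, (Tuple.sort g).trans (Fintype.equivFin N).symm, Tuple.monotone_sort g⟩

section Packing

variable {N : Type*} [DecidableEq N]

def packingValues (Fam : Finset (Finset N)) (v : Finset N → ℝ) (f : N → ℝ) : Set ℝ :=
  {r | ∃ y : Finset N → ℝ, (∀ F, 0 ≤ y F) ∧
    (∀ a : N, (∑ F ∈ Fam.filter (fun F => a ∈ F), y F) ≤ f a) ∧ r = ∑ F ∈ Fam, y F * v F}

lemma add_mem_packingValues {Fam : Finset (Finset N)} {v : Finset N → ℝ} {f g : N → ℝ} {r s : ℝ}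
    (hr : r ∈ packingValues Fam v f) (hs : s ∈ packingValues Fam v g) :
    r + s ∈ packingValues Fam v (f + g) := by
  obtain ⟨y, hy0, hy, rfl⟩ := hr
  obtain ⟨z, hz0, hz, rfl⟩ := hs
  refine ⟨y + z, fun F => add_nonneg (hy0 F) (hz0 F), fun a => ?_, ?_⟩
  · simpa only [Pi.add_apply, sum_add_distrib] using add_le_add (hy a) (hz a)
  · simp only [Pi.add_apply, add_mul, sum_add_distrib]

theorem isGreatest_packingValues [Fintype N] {Fam : Finset (Finset N)}
    (hne : ∀ F ∈ Fam, F.Nonempty) (huc : SupClosed (Fam : Set (Finset N)))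
    {v : Finset N → ℝ} (hv : IsSupermodularCapacity Fam v) {β : Finset N → ℝ}
    (hrep : ∀ G ∈ Fam, v G = ∑ F ∈ Fam.filter (fun F => F ⊆ G), β F)
    {f : N → ℝ} (hf : ∀ a, 0 ≤ f a) :
    IsGreatest (packingValues Fam v f) (cho Fam hne β f) := by
  obtain ⟨n, e, he⟩ := exists_equiv_fin_antitone f
  have hcho := cho_eq_sum_gap_mul hne (kernel_eq_sum huc hv.map_empty hrep) he
  refine ⟨?_, ?_⟩
  · obtain ⟨y, hy0, hy, hval⟩ := exists_packing_eq huc hv.map_empty hf he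
    exact ⟨y, hy0, hy, by rw [hcho, hval]⟩
  · rintro r ⟨y, hy0, hy, rfl⟩
    calc ∑ F ∈ Fam, y F * v F
        = ∑ F ∈ Fam, y F * v (kernel Fam F) :=
          sum_congr rfl fun F hF => by rw [kernel_of_mem hF]
      _ ≤ cho Fam hne β f := hcho ▸ sum_mul_le_sum_gap_mul (hv.monotone_kernel huc)
          (by rw [kernel_empty, hv.map_empty]) (hv.supermodular_kernel huc) he hy0 hy

end Packing

lemma cho_const_mul {N : Type*} {Fam : Finset (Finset N)} (hne : ∀ F ∈ Fam, F.Nonempty)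
    (β : Finset N → ℝ) (f : N → ℝ) {c : ℝ} (hc : 0 ≤ c) :
    cho Fam hne β (fun a => c * f a) = c * cho Fam hne β f := by
  rw [cho, cho, mul_sum]
  refine sum_congr rfl fun F _ => ?_
  rw [show (fun a => c * f a) = (c * ·) ∘ f from rfl,
    ← apply_inf'_eq_inf'_comp _ _ fun x y => mul_min_of_nonneg x y hc]
  ring

end Choquet

open Choquet in
theorem stmt_18_general {N : Type*} [Fintype N] [DecidableEq N]
    (Fam : Finset (Finset N)) (hne : ∀ F ∈ Fam, F.Nonempty)
    (huc : ∀ F ∈ Fam, ∀ G ∈ Fam, F ∪ G ∈ Fam)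
    (v : Finset N → ℝ) (hv0 : ∀ F ∈ Fam, 0 ≤ v F)
    (hmono : ∀ F ∈ Fam, ∀ G ∈ Fam, F ⊆ G → v F ≤ v G)
    (hvempty : v ∅ = 0)
    (hsupmod : ∀ F ∈ Fam, ∀ G ∈ Fam,
        v F + v G ≤ v (F ∪ G) + v ((Fam.filter (fun H => H ⊆ F ∩ G)).sup id))
    (β : Finset N → ℝ)
    (hrep : ∀ G ∈ Fam, v G = ∑ F ∈ Fam.filter (fun F => F ⊆ G), β F) :
    (∀ f : N → ℝ, (∀ a, 0 ≤ f a) →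
      IsGreatest {r : ℝ | ∃ y : Finset N → ℝ, (∀ F, 0 ≤ y F) ∧
          (∀ a : N, (∑ F ∈ Fam.filter (fun F => a ∈ F), y F) ≤ f a) ∧
          r = ∑ F ∈ Fam, y F * v F}
        (cho Fam hne β f)) ∧
    (∀ f : N → ℝ, (∀ a, 0 ≤ f a) → ∀ c : ℝ, 0 ≤ c →
        cho Fam hne β (fun a => c * f a) = c * cho Fam hne β f) ∧
    (∀ f g : N → ℝ, (∀ a, 0 ≤ f a) → (∀ a, 0 ≤ g a) →
        cho Fam hne β f + cho Fam hne β g ≤ cho Fam hne β (f + g)) := by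
  have hmax : ∀ f : N → ℝ, (∀ a, 0 ≤ f a) → IsGreatest (packingValues Fam v f) (cho Fam hne β f) :=
    fun f hf => isGreatest_packingValues hne (fun F hF G hG => huc F hF G hG)
      ⟨hv0, hmono, hvempty, hsupmod⟩ hrep hf
  refine ⟨hmax, fun f _ c hc => cho_const_mul hne β f hc, fun f g hf hg => ?_⟩
  exact (hmax _ fun a => add_nonneg (hf a) (hg a)).2
    (add_mem_packingValues (hmax f hf).1 (hmax g hg).1)

/-- for a supermodular capacity v on a union-closed family, the Choquet
integral equals the optimal value of the packing LP, and hence is positively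
homogeneous and superadditive on ℝ^N₊. -/
theorem stmt_18 {N : Type*} [Fintype N] [DecidableEq N]
    (Fam : Finset (Finset N)) (hne : ∀ F ∈ Fam, F.Nonempty)
    (hcov : ∀ x : N, ∃ F ∈ Fam, x ∈ F)
    (huc : ∀ F ∈ Fam, ∀ G ∈ Fam, F ∪ G ∈ Fam)
    (v : Finset N → ℝ) (hv0 : ∀ F ∈ Fam, 0 ≤ v F)
    (hmono : ∀ F ∈ Fam, ∀ G ∈ Fam, F ⊆ G → v F ≤ v G)
    (hvempty : v ∅ = 0)
    (hsupmod : ∀ F ∈ Fam, ∀ G ∈ Fam,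
        v F + v G ≤ v (F ∪ G) + v ((Fam.filter (fun H => H ⊆ F ∩ G)).sup id))
    (β : Finset N → ℝ)
    (hrep : ∀ G ∈ Fam, v G = ∑ F ∈ Fam.filter (fun F => F ⊆ G), β F) :
    (∀ f : N → ℝ, (∀ a, 0 ≤ f a) →
      IsGreatest {r : ℝ | ∃ y : Finset N → ℝ, (∀ F, 0 ≤ y F) ∧
          (∀ a : N, (∑ F ∈ Fam.filter (fun F => a ∈ F), y F) ≤ f a) ∧
          r = ∑ F ∈ Fam, y F * v F}
        (cho Fam hne β f)) ∧
    (∀ f : N → ℝ, (∀ a, 0 ≤ f a) → ∀ c : ℝ, 0 ≤ c →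
        cho Fam hne β (fun a => c * f a) = c * cho Fam hne β f) ∧
    (∀ f g : N → ℝ, (∀ a, 0 ≤ f a) → (∀ a, 0 ≤ g a) →
        cho Fam hne β f + cho Fam hne β g ≤ cho Fam hne β (f + g)) :=
  stmt_18_general Fam hne huc v hv0 hmono hvempty hsupmod β hrep
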